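/- The limit as n → ∞ of (∑_{i+j+k+l=n, i,j,k,l≥1} a(i)a(j)a(k)a(l)) / a(n) equals 500/19683, where a(n) = 2(4n+1)!/((n+1)!(3n+2)!). -/

import Mathlib

/-!
Let `B = 1 + x B ^ 4`; then `a` is the coefficient sequence of `g = 2 B ^ 2 - B ^ 3`, and the sum
in the theorem is `[x ^ n] (g - 1) ^ 4`. At `ρ = 27 / 256` the equation `s = 1 + ρ s ^ 4` has the
double root `B(ρ) = 4 / 3`, so `g(ρ) - 1 = 5 / 27`. The sequence `a` is subexponential with ratio
`ρ`: `a n / a (n + 1) → ρ`, and `a n (n + 1) ^ 4 ρ ^ n` is increasing, so `a m ≤ 16 ρ ^ d a (m + d)`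
for `d ≤ m`. For such a sequence, if `u / a → U` and `v / a → V`, dominated convergence on each
half of the convolution gives `(u * v)_n / a_n → V û(ρ) + U v̂(ρ)`; inductively
`[x ^ n] (g - 1) ^ (k + 1) / a n → (k + 1) (g(ρ) - 1) ^ k`, which for `k = 3` is
`4 (5 / 27) ^ 3 = 500 / 19683`.
-/

open Filter Finset

noncomputable def a (n : ℕ) : ℝ :=
  2 * (Nat.factorial (4 * n + 1)) / ((Nat.factorial (n + 1)) * (Nat.factorial (3 * n + 2)))

open Topology

noncomputable def cauchyProduct (u v : ℕ → ℝ) (n : ℕ) : ℝ :=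
  ∑ i ∈ range (n + 1), u i * v (n - i)

section CauchyProduct

variable {u v : ℕ → ℝ}

lemma cauchyProduct_nonneg (hu : ∀ n, 0 ≤ u n) (hv : ∀ n, 0 ≤ v n) (n : ℕ) :
    0 ≤ cauchyProduct u v n :=
  sum_nonneg fun i _ => mul_nonneg (hu i) (hv _)

lemma iterate_cauchyProduct_nonneg (hu : ∀ n, 0 ≤ u n) (hv : ∀ n, 0 ≤ v n) (k n : ℕ) :
    0 ≤ (cauchyProduct u)^[k] v n := by
  induction k generalizing n with
  | zero => exact hv n
  | succ k ih =>
    rw [Function.iterate_succ_apply']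
    exact cauchyProduct_nonneg hu ih n

lemma cauchyProduct_mul_pow (r : ℝ) (n : ℕ) :
    cauchyProduct u v n * r ^ n = cauchyProduct (fun i => u i * r ^ i) (fun i => v i * r ^ i) n := by
  rw [cauchyProduct, cauchyProduct, sum_mul]
  refine sum_congr rfl fun i hi => ?_
  rw [← pow_sub_mul_pow r (Nat.le_of_lt_succ (mem_range.1 hi))]
  ring

lemma hasSum_cauchyProduct_mul_pow {r Su Sv : ℝ} (hr : 0 ≤ r) (hu : ∀ n, 0 ≤ u n)
    (hv : ∀ n, 0 ≤ v n) (hSu : HasSum (fun n => u n * r ^ n) Su)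
    (hSv : HasSum (fun n => v n * r ^ n) Sv) :
    HasSum (fun n => cauchyProduct u v n * r ^ n) (Su * Sv) := by
  have norm_eq {w : ℕ → ℝ} (hw : ∀ n, 0 ≤ w n) : (fun n => ‖w n * r ^ n‖) = fun n => w n * r ^ n :=
    funext fun n => Real.norm_of_nonneg (mul_nonneg (hw n) (pow_nonneg hr n))
  have h := hasSum_sum_range_mul_of_summable_norm
    (by rw [norm_eq hu]; exact hSu.summable) (by rw [norm_eq hv]; exact hSv.summable)
  rw [hSu.tsum_eq, hSv.tsum_eq] at h
  simp only [cauchyProduct_mul_pow]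
  exact h

lemma sum_range_cauchyProduct_le (hu : ∀ n, 0 ≤ u n) (hv : ∀ n, 0 ≤ v n) (N : ℕ) :
    ∑ n ∈ range N, cauchyProduct u v n ≤ (∑ i ∈ range N, u i) * ∑ j ∈ range N, v j := by
  simp only [cauchyProduct]
  rw [sum_range_diag_flip N fun i j => u i * v j, sum_mul]
  refine sum_le_sum fun i _ => ?_
  rw [← mul_sum]
  exact mul_le_mul_of_nonneg_left
    (sum_le_sum_of_subset_of_nonneg (range_subset_range.2 (Nat.sub_le N i)) fun j _ _ => hv j) (hu i)

lemma cauchyProduct_succ (n : ℕ) :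
    cauchyProduct u v (n + 1) = ∑ i ∈ range (n + 1), u i * v (n - i + 1) + u (n + 1) * v 0 := by
  rw [cauchyProduct, sum_range_succ, Nat.sub_self]
  congr 1
  exact sum_congr rfl fun i hi => by rw [Nat.sub_add_comm (Nat.le_of_lt_succ (mem_range.1 hi))]

lemma cauchyProduct_eq_add {m n : ℕ} (hm : m ≤ n + 1) :
    cauchyProduct u v n =
      ∑ i ∈ range m, u i * v (n - i) + ∑ j ∈ range (n + 1 - m), v j * u (n - j) := by
  rw [cauchyProduct, ← Nat.add_sub_cancel' hm, sum_range_add, Nat.add_sub_cancel' hm,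
    ← sum_range_reflect (fun j => v j * u (n - j))]
  congr 1
  refine sum_congr rfl fun j hj => ?_
  rw [mem_range] at hj
  rw [mul_comm, show n - (n + 1 - m - 1 - j) = m + j by omega,
    show n + 1 - m - 1 - j = n - (m + j) by omega]

lemma cauchyProduct_update_zero_eq_sum_Ico (hv : v 0 = 0) (n : ℕ) :
    cauchyProduct (Function.update u 0 0) v n = ∑ i ∈ Ico 1 n, u i * v (n - i) := by
  rcases Nat.eq_zero_or_pos n with rfl | hn
  · simp [cauchyProduct]
  rw [cauchyProduct, sum_range_succ, Nat.sub_self, hv, mul_zero, add_zero, range_eq_Ico,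
    sum_eq_sum_Ico_succ_bot hn, Function.update_self, zero_mul, zero_add]
  refine sum_congr rfl fun i hi => ?_
  rw [Function.update_of_ne (by simp at hi; omega)]

lemma iterate_three_cauchyProduct_update_zero (n : ℕ) :
    (cauchyProduct (Function.update u 0 0))^[3] (Function.update u 0 0) n =
      ∑ i ∈ Ico 1 n, ∑ j ∈ Ico 1 (n - i), ∑ k ∈ Ico 1 (n - i - j),
        u i * u j * u k * u (n - i - j - k) := by
  have h0 (w : ℕ → ℝ) : cauchyProduct (Function.update u 0 0) w 0 = 0 := by simp [cauchyProduct]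
  simp only [Function.iterate_succ_apply', Function.iterate_zero, id]
  rw [cauchyProduct_update_zero_eq_sum_Ico (h0 _)]
  refine sum_congr rfl fun i _ => ?_
  rw [cauchyProduct_update_zero_eq_sum_Ico (h0 _), mul_sum]
  refine sum_congr rfl fun j _ => ?_
  rw [cauchyProduct_update_zero_eq_sum_Ico (by simp), mul_sum, mul_sum]
  refine sum_congr rfl fun k hk => ?_
  rw [Function.update_of_ne (by simp at hk; omega)]
  ring

end CauchyProduct

section Subexponential

variable {a u v : ℕ → ℝ} {ρ C U V Su Sv : ℝ}

lemma tendsto_div_sub_of_tendsto_div_succ (ha : ∀ n, 0 < a n)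
    (hρ : Tendsto (fun n => a n / a (n + 1)) atTop (𝓝 ρ)) (i : ℕ) :
    Tendsto (fun n => a (n - i) / a n) atTop (𝓝 (ρ ^ i)) := by
  induction i with
  | zero => simp [div_self (ha _).ne']
  | succ i ih =>
    rw [pow_succ']
    refine ((hρ.comp (tendsto_sub_atTop_nat (i + 1))).mul ih).congr' ?_
    filter_upwards [eventually_ge_atTop (i + 1)] with n hn
    rw [Function.comp_apply, show n - (i + 1) + 1 = n - i by omega,
      div_mul_div_cancel₀ (ha _).ne']

lemma tendsto_sub_div (ha : ∀ n, 0 < a n)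
    (hρ : Tendsto (fun n => a n / a (n + 1)) atTop (𝓝 ρ))
    (hV : Tendsto (fun n => v n / a n) atTop (𝓝 V)) (i : ℕ) :
    Tendsto (fun n => v (n - i) / a n) atTop (𝓝 (V * ρ ^ i)) := by
  refine ((hV.comp (tendsto_sub_atTop_nat i)).mul
    (tendsto_div_sub_of_tendsto_div_succ ha hρ i)).congr fun n => ?_
  rw [Function.comp_apply, div_mul_div_cancel₀ (ha _).ne']

/-- Dominated convergence for the series `∑ u i * (v (n - i) / a n)`: with `v ≤ K a`, on
`i ≤ n / 2` the domination hypothesis bounds its `i`-th term by `K * C * (u i * ρ ^ i)`. -/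
lemma tendsto_sum_range_mul_div (ha : ∀ n, 0 < a n)
    (hρ : Tendsto (fun n => a n / a (n + 1)) atTop (𝓝 ρ))
    (hC : ∀ m d, d ≤ m → a m ≤ C * ρ ^ d * a (m + d))
    (hu : ∀ n, 0 ≤ u n) (hv : ∀ n, 0 ≤ v n)
    (hV : Tendsto (fun n => v n / a n) atTop (𝓝 V))
    (hSu : HasSum (fun n => u n * ρ ^ n) Su)
    {h : ℕ → ℕ} (hh : Tendsto h atTop atTop) (hh_le : ∀ n, h n ≤ n / 2 + 1) :
    Tendsto (fun n => (∑ i ∈ range (h n), u i * v (n - i)) / a n) atTop (𝓝 (V * Su)) := by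
  obtain ⟨K, hK⟩ : ∃ K, ∀ n, v n ≤ K * a n := by
    obtain ⟨K, hK⟩ := hV.bddAbove_range
    exact ⟨K, fun n => (div_le_iff₀ (ha n)).1 (hK ⟨n, rfl⟩)⟩
  have hK0 : 0 ≤ K := nonneg_of_mul_nonneg_left ((hv 0).trans (hK 0)) (ha 0)
  set f : ℕ → ℕ → ℝ := fun n i => if i < h n then u i * (v (n - i) / a n) else 0
  have hf_sum (n : ℕ) : ∑' i, f n i = (∑ i ∈ range (h n), u i * v (n - i)) / a n := by
    rw [tsum_eq_sum (s := range (h n)) fun i hi => if_neg (by simpa using hi), sum_div]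
    exact sum_congr rfl fun i hi => by rw [if_pos (mem_range.1 hi), mul_div_assoc]
  have hρ0 : 0 ≤ ρ := ge_of_tendsto' hρ fun n => (div_pos (ha n) (ha _)).le
  have hC0 : 0 ≤ C := by
    have := hC 0 0 le_rfl
    rw [pow_zero, mul_one, Nat.add_zero] at this
    nlinarith [ha 0]
  have hf_lim (i : ℕ) : Tendsto (fun n => f n i) atTop (𝓝 (V * (u i * ρ ^ i))) := by
    rw [mul_left_comm]
    refine ((tendsto_sub_div ha hρ hV i).const_mul (u i)).congr' ?_
    filter_upwards [hh.eventually_gt_atTop i] with n hn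
    exact (if_pos hn).symm
  have hf_le (n i : ℕ) : ‖f n i‖ ≤ K * C * (u i * ρ ^ i) := by
    by_cases hi : i < h n
    · have hin : i ≤ n - i := by have := hh_le n; omega
      have hdom : a (n - i) ≤ C * ρ ^ i * a n := by
        simpa [Nat.sub_add_cancel (by omega : i ≤ n)] using hC (n - i) i hin
      simp only [f, if_pos hi]
      rw [Real.norm_of_nonneg (mul_nonneg (hu i) (div_nonneg (hv _) (ha n).le)),
        ← mul_div_assoc, div_le_iff₀ (ha n)]
      calc u i * v (n - i) ≤ u i * (K * (C * ρ ^ i * a n)) :=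
            mul_le_mul_of_nonneg_left ((hK _).trans (mul_le_mul_of_nonneg_left hdom hK0)) (hu i)
        _ = K * C * (u i * ρ ^ i) * a n := by ring
    · simp only [f, if_neg hi, norm_zero]
      have := hu i
      positivity
  have hlim := tendsto_tsum_of_dominated_convergence (hSu.summable.mul_left (K * C)) hf_lim
    (Eventually.of_forall hf_le)
  rwa [tsum_mul_left, hSu.tsum_eq, funext hf_sum] at hlim

theorem tendsto_cauchyProduct_div (ha : ∀ n, 0 < a n)
    (hρ : Tendsto (fun n => a n / a (n + 1)) atTop (𝓝 ρ))
    (hC : ∀ m d, d ≤ m → a m ≤ C * ρ ^ d * a (m + d))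
    (hu : ∀ n, 0 ≤ u n) (hv : ∀ n, 0 ≤ v n)
    (hU : Tendsto (fun n => u n / a n) atTop (𝓝 U))
    (hV : Tendsto (fun n => v n / a n) atTop (𝓝 V))
    (hSu : HasSum (fun n => u n * ρ ^ n) Su) (hSv : HasSum (fun n => v n * ρ ^ n) Sv) :
    Tendsto (fun n => cauchyProduct u v n / a n) atTop (𝓝 (V * Su + U * Sv)) := by
  have hlow := tendsto_sum_range_mul_div ha hρ hC hu hv hV hSu (h := fun n => n / 2 + 1)
    (tendsto_atTop_atTop.2 fun b => ⟨2 * b, fun n hn => by omega⟩) fun n => le_rfl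
  have hhigh := tendsto_sum_range_mul_div ha hρ hC hv hu hU hSv (h := fun n => n + 1 - (n / 2 + 1))
    (tendsto_atTop_atTop.2 fun b => ⟨2 * b + 1, fun n hn => by omega⟩) fun n => by omega
  refine (hlow.add hhigh).congr fun n => ?_
  rw [cauchyProduct_eq_add (by omega : n / 2 + 1 ≤ n + 1), add_div]

theorem tendsto_iterate_cauchyProduct_div {S : ℝ} (ha : ∀ n, 0 < a n)
    (hρ : Tendsto (fun n => a n / a (n + 1)) atTop (𝓝 ρ))
    (hC : ∀ m d, d ≤ m → a m ≤ C * ρ ^ d * a (m + d))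
    (hu : ∀ n, 0 ≤ u n) (hU : Tendsto (fun n => u n / a n) atTop (𝓝 1))
    (hS : HasSum (fun n => u n * ρ ^ n) S) (k : ℕ) :
    Tendsto (fun n => (cauchyProduct u)^[k] u n / a n) atTop (𝓝 ((k + 1) * S ^ k)) ∧
      HasSum (fun n => (cauchyProduct u)^[k] u n * ρ ^ n) (S ^ (k + 1)) := by
  induction k with
  | zero => simpa using ⟨hU, hS⟩
  | succ k ih =>
    simp only [Function.iterate_succ_apply']
    have hk := iterate_cauchyProduct_nonneg hu hu k
    constructor
    · convert tendsto_cauchyProduct_div ha hρ hC hu hk hU ih.1 hS ih.2 using 2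
      push_cast
      ring
    · rw [pow_succ']
      exact hasSum_cauchyProduct_mul_pow (ge_of_tendsto' hρ fun n => (div_pos (ha n) (ha _)).le)
        hu hk hS ih.2

end Subexponential

section

local notation "ρ" => (27 / 256 : ℝ)

open scoped Nat

lemma a_pos (n : ℕ) : 0 < a n := by
  unfold a
  positivity

lemma a_succ (n : ℕ) :
    a (n + 1) = (4 * n + 2) * (4 * n + 3) * (4 * n + 4) * (4 * n + 5)
      / ((n + 2) * (3 * n + 3) * (3 * n + 4) * (3 * n + 5)) * a n := by
  unfold a
  rw [show 4 * (n + 1) + 1 = 4 * n + 1 + 4 by ring, show 3 * (n + 1) + 2 = 3 * n + 2 + 3 by ring]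
  simp only [Nat.factorial_succ, Nat.add_succ, Nat.add_zero]
  push_cast
  field_simp
  ring

lemma mul_a_succ_le (n : ℕ) : ρ * a (n + 1) ≤ a n := by
  have hn : (0 : ℝ) ≤ n := n.cast_nonneg
  rw [a_succ, ← mul_assoc]
  refine mul_le_of_le_one_left (a_pos n).le ?_
  rw [← mul_div_assoc, div_le_one (by positivity)]
  nlinarith [pow_nonneg hn 2, pow_nonneg hn 3]

lemma a_mul_le (n : ℕ) : a n * (n + 1) ^ 4 ≤ ρ * a (n + 1) * (n + 2) ^ 4 := by
  have hn : (0 : ℝ) ≤ n := n.cast_nonneg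
  rw [a_succ, mul_comm (a n), show ∀ x y : ℝ, ρ * (x * a n) * y = ρ * x * y * a n by intros; ring]
  refine mul_le_mul_of_nonneg_right ?_ (a_pos n).le
  rw [mul_div_assoc', div_mul_eq_mul_div, le_div_iff₀ (by positivity)]
  nlinarith [pow_nonneg hn 2, pow_nonneg hn 3, pow_nonneg hn 4, pow_nonneg hn 5, pow_nonneg hn 6,
    pow_nonneg hn 7, pow_nonneg hn 8]

lemma tendsto_a_div_a_succ : Tendsto (fun n => a n / a (n + 1)) atTop (𝓝 ρ) := by
  have hupper : Tendsto (fun n : ℕ => ρ * (1 + 1 / ((n : ℝ) + 1)) ^ 4) atTop (𝓝 ρ) := by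
    simpa using ((tendsto_one_div_add_atTop_nhds_zero_nat.const_add 1).pow 4).const_mul ρ
  refine tendsto_of_tendsto_of_tendsto_of_le_of_le tendsto_const_nhds hupper
    (fun n => (le_div_iff₀ (a_pos _)).2 (mul_a_succ_le n)) fun n => ?_
  have key := a_mul_le n
  rw [div_le_iff₀ (a_pos _)]
  field_simp
  linarith

lemma monotone_a_mul_pow : Monotone fun n : ℕ => a n * (n + 1) ^ 4 * ρ ^ n := by
  refine monotone_nat_of_le_succ fun n => ?_
  rw [pow_succ' (27 / 256 : ℝ) n]
  push_cast
  nlinarith [a_mul_le n, pow_pos (show (0 : ℝ) < 27 / 256 by norm_num) n]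

lemma a_le_mul_a_add {m d : ℕ} (hd : d ≤ m) : a m ≤ 16 * ρ ^ d * a (m + d) := by
  have hmono := monotone_a_mul_pow (Nat.le_add_right m d)
  simp only [pow_add] at hmono
  have hsq : ((m + d : ℕ) + 1 : ℝ) ^ 4 ≤ 16 * ((m : ℝ) + 1) ^ 4 := by
    rw [show (16 : ℝ) = 2 ^ 4 by norm_num, ← mul_pow]
    gcongr
    push_cast
    linarith [(Nat.cast_le (α := ℝ)).2 hd]
  have hpos : (0 : ℝ) < ((m : ℝ) + 1) ^ 4 * ρ ^ m := by positivity
  refine le_of_mul_le_mul_right ?_ hpos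
  calc a m * (((m : ℝ) + 1) ^ 4 * ρ ^ m) = a m * (m + 1) ^ 4 * ρ ^ m := by ring
    _ ≤ a (m + d) * ((m + d : ℕ) + 1) ^ 4 * (ρ ^ m * ρ ^ d) := hmono
    _ ≤ a (m + d) * (16 * ((m : ℝ) + 1) ^ 4) * (ρ ^ m * ρ ^ d) := by
        gcongr
        exact (a_pos _).le
    _ = 16 * ρ ^ d * a (m + d) * (((m : ℝ) + 1) ^ 4 * ρ ^ m) := by ring

/-- `raney j n = [x^n] B(x)^(j+1)`, where `B = 1 + x B^4`. -/
noncomputable def raney (j n : ℕ) : ℝ :=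
  (j + 1) * (4 * n + j)! / (n ! * (3 * n + j + 1)!)

lemma raney_pos (j n : ℕ) : 0 < raney j n := by
  unfold raney
  positivity

lemma raney_zero_right (j : ℕ) : raney j 0 = 1 := by
  simp only [raney, mul_zero, zero_add, Nat.factorial_zero, Nat.factorial_succ]
  push_cast
  field_simp

lemma raney_succ_succ (j n : ℕ) : raney (j + 1) (n + 1) = raney j (n + 1) + raney (j + 4) n := by
  unfold raney
  rw [show 4 * (n + 1) + (j + 1) = 4 * n + j + 4 + 1 by ring,
    show 3 * (n + 1) + (j + 1) + 1 = 3 * n + j + 4 + 1 by ring,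
    show 4 * (n + 1) + j = 4 * n + j + 4 by ring, show 3 * (n + 1) + j + 1 = 3 * n + j + 4 by ring,
    show 4 * n + (j + 4) = 4 * n + j + 4 by ring, show 3 * n + (j + 4) + 1 = 3 * n + j + 4 + 1 by ring]
  simp only [Nat.factorial_succ (4 * n + j + 4), Nat.factorial_succ (3 * n + j + 4),
    Nat.factorial_succ n]
  push_cast
  field_simp
  ring

lemma raney_zero_succ (n : ℕ) : raney 0 (n + 1) = raney 3 n := by
  unfold raney
  rw [show 4 * (n + 1) + 0 = 4 * n + 3 + 1 by ring, show 3 * (n + 1) + 0 + 1 = 3 * n + 3 + 1 by ring]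
  simp only [Nat.factorial_succ (4 * n + 3), Nat.factorial_succ n]
  push_cast
  field_simp
  ring

lemma a_eq_raney (n : ℕ) : a n = 2 * raney 1 n - raney 2 n := by
  unfold a raney
  rw [show 4 * n + 2 = 4 * n + 1 + 1 by ring,
    show 3 * n + 1 + 1 = 3 * n + 2 by ring]
  simp only [Nat.factorial_succ (4 * n + 1), Nat.factorial_succ (3 * n + 2), Nat.factorial_succ n]
  push_cast
  field_simp
  ring

lemma cauchyProduct_raney (n j : ℕ) : cauchyProduct (raney 0) (raney j) n = raney (j + 1) n := by
  induction n generalizing j with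
  | zero => simp [cauchyProduct, raney_zero_right]
  | succ n ihn =>
    induction j with
    | zero =>
      rw [cauchyProduct_succ]
      simp only [raney_zero_succ, raney_zero_right, mul_one]
      rw [← cauchyProduct, ihn, raney_succ_succ, raney_zero_succ, add_comm]
    | succ j ihj =>
      rw [cauchyProduct_succ]
      simp only [raney_succ_succ j, mul_add, sum_add_distrib]
      rw [← cauchyProduct, ihn, raney_zero_right, ← raney_zero_right j, add_right_comm,
        ← cauchyProduct_succ, ihj, raney_succ_succ (j + 1)]

lemma raney_mul_pow_nonneg (j n : ℕ) : 0 ≤ raney j n * ρ ^ n := by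
  have := raney_pos j n
  positivity

lemma sum_range_raney_le_pow (j N : ℕ) :
    ∑ n ∈ range N, raney j n * ρ ^ n ≤ (∑ n ∈ range N, raney 0 n * ρ ^ n) ^ (j + 1) := by
  induction j with
  | zero => simp
  | succ j ih =>
    have h := sum_range_cauchyProduct_le (raney_mul_pow_nonneg 0) (raney_mul_pow_nonneg j) N
    simp only [← cauchyProduct_mul_pow, cauchyProduct_raney] at h
    rw [pow_succ']
    exact h.trans (mul_le_mul_of_nonneg_left ih (sum_nonneg fun n _ => raney_mul_pow_nonneg 0 n))

/-- The induction closes because `4 / 3 = 1 + ρ (4 / 3) ^ 4`. -/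
lemma sum_range_raney_zero_le (N : ℕ) : ∑ n ∈ range N, raney 0 n * ρ ^ n ≤ 4 / 3 := by
  induction N with
  | zero => norm_num
  | succ N ih =>
    have hP := (sum_range_raney_le_pow 3 N).trans
      (pow_le_pow_left₀ (sum_nonneg fun n _ => raney_mul_pow_nonneg 0 n) ih 4)
    rw [sum_range_succ', raney_zero_right]
    simp only [raney_zero_succ, pow_succ, ← mul_assoc, ← sum_mul]
    linarith

lemma hasSum_raney (j : ℕ) :
    HasSum (fun n => raney j n * ρ ^ n) ((∑' n, raney 0 n * ρ ^ n) ^ (j + 1)) := by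
  have h0 := (summable_of_sum_range_le (raney_mul_pow_nonneg 0) sum_range_raney_zero_le).hasSum
  induction j with
  | zero => simpa using h0
  | succ j ih =>
    have h := hasSum_cauchyProduct_mul_pow (by norm_num) (fun n => (raney_pos 0 n).le)
      (fun n => (raney_pos j n).le) h0 ih
    simpa only [cauchyProduct_raney, ← pow_succ'] using h

lemma tsum_raney_zero : ∑' n, raney 0 n * ρ ^ n = 4 / 3 := by
  have hs : ∑' n, raney 0 n * ρ ^ n = 1 + ρ * (∑' n, raney 0 n * ρ ^ n) ^ 4 := by
    conv_lhs => rw [(hasSum_raney 0).summable.tsum_eq_zero_add, raney_zero_right]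
    simp only [raney_zero_succ, pow_succ, ← mul_assoc]
    rw [tsum_mul_right, (hasSum_raney 3).tsum_eq]
    ring
  generalize ∑' n, raney 0 n * ρ ^ n = s at hs ⊢
  have h : (3 * s - 4) ^ 2 * (3 * s ^ 2 + 8 * s + 16) = 0 := by linear_combination -256 * hs
  have hq : 3 * s ^ 2 + 8 * s + 16 ≠ 0 := by nlinarith [sq_nonneg (3 * s + 4)]
  have := pow_eq_zero_iff (n := 2) (by norm_num) |>.1 ((mul_eq_zero.1 h).resolve_right hq)
  linarith

lemma hasSum_a : HasSum (fun n => a n * ρ ^ n) (32 / 27) := by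
  have h := ((hasSum_raney 1).mul_left 2).sub (hasSum_raney 2)
  rw [tsum_raney_zero, show 2 * (4 / 3 : ℝ) ^ (1 + 1) - (4 / 3) ^ (2 + 1) = 32 / 27 by norm_num] at h
  refine h.congr_fun fun n => ?_
  rw [a_eq_raney]
  ring

lemma a_zero : a 0 = 1 := by
  norm_num [a, Nat.factorial]

lemma update_a_nonneg (n : ℕ) : 0 ≤ Function.update a 0 0 n := by
  rcases eq_or_ne n 0 with rfl | hn
  · simp
  · rw [Function.update_of_ne hn]
    exact (a_pos n).le

lemma tendsto_update_a_div : Tendsto (fun n => Function.update a 0 0 n / a n) atTop (𝓝 1) := by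
  refine tendsto_const_nhds.congr' ?_
  filter_upwards [eventually_ne_atTop 0] with n hn
  rw [Function.update_of_ne hn, div_self (a_pos n).ne']

lemma hasSum_update_a : HasSum (fun n => Function.update a 0 0 n * ρ ^ n) (5 / 27) := by
  have h := hasSum_a.update 0 0
  rw [a_zero, show (0 : ℝ) - 1 * ρ ^ 0 + 32 / 27 = 5 / 27 by norm_num] at h
  refine h.congr_fun fun n => ?_
  rcases eq_or_ne n 0 with rfl | hn
  · simp
  · simp [Function.update_of_ne hn]

end

theorem stmt13 :
    Tendsto (fun n : ℕ =>
        (∑ i ∈ Finset.Ico 1 n, ∑ j ∈ Finset.Ico 1 (n - i), ∑ k ∈ Finset.Ico 1 (n - i - j),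
          a i * a j * a k * a (n - i - j - k)) / a n)
      atTop (nhds (500 / 19683)) := by
  have h := (tendsto_iterate_cauchyProduct_div a_pos tendsto_a_div_a_succ
    (fun _ _ => a_le_mul_a_add) update_a_nonneg tendsto_update_a_div hasSum_update_a 3).1
  convert h using 2 with n
  · rw [iterate_three_cauchyProduct_update_zero]
  · norm_num
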